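/- In a coherent PF-quantale (i.e. a quantale in which c^⊥ is pure for all compact c), for any m-prime element p the element O(p) is m-prime. -/

import Mathlib

open CompleteLattice

/-- A commutative integral quantale: a complete lattice with a commutative monoid
structure whose unit is the top element, with multiplication distributing over
arbitrary joins. -/
class CommQuantale (A : Type*) extends CompleteLattice A, CommMonoid A where
  one_eq_top : (1 : A) = ⊤
  mul_sSup_distrib : ∀ (a : A) (S : Set A), a * sSup S = ⨆ b ∈ S, a * b

namespace CommQuantale

variable {A : Type*} [CommQuantale A]

/-- m-prime element -/
def MPrime (p : A) : Prop := p < 1 ∧ ∀ a b : A, a * b ≤ p → a ≤ p ∨ b ≤ p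

/-- radical -/
def rad (a : A) : A := sInf {p : A | MPrime p ∧ a ≤ p}

/-- annihilator / negation `c^⊥ = ⋁{x | c·x = 0}` -/
def perp (c : A) : A := sSup {x : A | c * x = ⊥}

/-- residuation `c → b = ⋁{x | c·x ≤ b}` -/
def resid (c b : A) : A := sSup {x : A | c * x ≤ b}

/-- pure element -/
def IsPure (a : A) : Prop :=
  ∀ c : A, IsCompactElement c → c ≤ a → a ⊔ perp c = 1

/-- weakly pure element -/
def IsWPure (a : A) : Prop :=
  ∀ c : A, IsCompactElement c → c ≤ a → a ⊔ resid c (rad ⊥) = 1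

/-- complemented element -/
def IsComplemented (e : A) : Prop := ∃ f : A, e ⊔ f = 1 ∧ e ⊓ f = ⊥

/-- regular element: a join of complemented elements -/
def IsRegular (a : A) : Prop :=
  ∃ S : Set A, (∀ e ∈ S, IsComplemented e) ∧ a = sSup S

/-- Ker operator -/
def Ker (a : A) : A :=
  sSup {d : A | IsCompactElement d ∧ d ≤ a ∧ a ⊔ perp d = 1}

/-- O operator: `O(p) = ⋁{c compact | c^⊥ ≰ p}` -/
def O (p : A) : A := sSup {c : A | IsCompactElement c ∧ ¬ perp c ≤ p}

/-- O operator, as in Section 4: `O(p) = ⋁{d compact | d·e = 0 for some compact e ≰ p}` -/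
def O' (p : A) : A :=
  sSup {d : A | IsCompactElement d ∧ ∃ e : A, IsCompactElement e ∧ ¬ e ≤ p ∧ d * e = ⊥}

/-- algebraic quantale: every element is the join of the compact elements below it -/
def Algebraic (A : Type*) [CommQuantale A] : Prop :=
  ∀ a : A, a = sSup {c : A | IsCompactElement c ∧ c ≤ a}

/-- coherent quantale -/
def Coherent (A : Type*) [CommQuantale A] : Prop :=
  Algebraic A ∧ IsCompactElement (1 : A) ∧
    ∀ c d : A, IsCompactElement c → IsCompactElement d → IsCompactElement (c * d)

end CommQuantale

namespace CommQuantale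

variable {A : Type*} [CommQuantale A]

lemma qmul_bot (a : A) : a * ⊥ = ⊥ := by
  have := mul_sSup_distrib a (∅ : Set A)
  simpa using this

lemma qmul_sup (a b c : A) : a * (b ⊔ c) = a * b ⊔ a * c := by
  have h := mul_sSup_distrib a {b, c}
  rw [sSup_pair] at h
  rw [h]
  apply le_antisymm
  · apply iSup_le; intro x; apply iSup_le
    rintro (rfl | rfl)
    · exact le_sup_left
    · exact le_sup_right
  · apply sup_le
    · exact le_iSup_of_le b (le_iSup_of_le (Set.mem_insert b {c}) le_rfl)
    · exact le_iSup_of_le c (le_iSup_of_le (Set.mem_insert_of_mem b rfl) le_rfl)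

lemma qmul_le_qmul {a b c d : A} (h1 : a ≤ b) (h2 : c ≤ d) : a * c ≤ b * d := by
  have h3 : a * c ≤ a * d := by
    have h := qmul_sup a c d
    rw [sup_eq_right.mpr h2] at h
    calc a * c ≤ a * c ⊔ a * d := le_sup_left
    _ = a * d := h.symm
  have h4 : a * d ≤ b * d := by
    have h := qmul_sup d a b
    rw [sup_eq_right.mpr h1] at h
    calc a * d = d * a := mul_comm _ _
    _ ≤ d * a ⊔ d * b := le_sup_left
    _ = d * b := h.symm
    _ = b * d := mul_comm _ _
  exact h3.trans h4

lemma mul_perp_eq_bot (e : A) : e * perp e = ⊥ := by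
  rw [perp, mul_sSup_distrib]
  apply le_bot_iff.mp
  apply iSup_le; intro x; apply iSup_le; intro hx
  exact le_of_eq hx

lemma le_perp {a x : A} (h : a * x = ⊥) : x ≤ perp a := le_sSup h

lemma perp_anti {a b : A} (h : a ≤ b) : perp b ≤ perp a := by
  apply _root_.sSup_le; intro x hx
  apply le_perp
  exact le_bot_iff.mp (le_of_le_of_eq (qmul_le_qmul h (le_refl x)) hx)

lemma compact_below (halg : Algebraic A) {a p : A} (h : ¬ a ≤ p) :
    ∃ c : A, IsCompactElement c ∧ c ≤ a ∧ ¬ c ≤ p := by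
  by_contra hc
  push_neg at hc
  apply h
  calc a = sSup {c : A | IsCompactElement c ∧ c ≤ a} := halg a
  _ ≤ p := _root_.sSup_le fun c ⟨h1, h2⟩ => hc c h1 h2

lemma perp_bot : perp (⊥ : A) = ⊤ := by
  apply top_unique
  apply le_perp
  rw [mul_comm]; exact qmul_bot ⊤

theorem key {A : Type*} [CommQuantale A]
    (hcoh : Coherent A)
    (hPF : ∀ c : A, IsCompactElement c → IsPure (perp c))
    {p : A} (hp : MPrime p) {c d : A} (hc : IsCompactElement c)
    (hd : IsCompactElement d) (hcd : ¬ perp (c * d) ≤ p) :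
    ¬ perp c ≤ p ∨ ¬ perp d ≤ p := by
  obtain ⟨halg, -, hmulc⟩ := hcoh
  by_contra hcon
  push_neg at hcon
  obtain ⟨hcp, hdp⟩ := hcon
  have hplt : ¬ (1 : A) ≤ p := fun h => absurd (le_antisymm hp.1.le h) (ne_of_lt hp.1)
  -- f
  obtain ⟨f, hf, hfle, hfp⟩ := compact_below halg hcd
  have hcdf : (c * d) * f = ⊥ :=
    le_bot_iff.mp ((qmul_le_qmul (le_refl (c*d)) hfle).trans (le_of_eq (mul_perp_eq_bot _)))
  -- d * f ≤ perp c
  have hdfc : d * f ≤ perp c := le_perp (by rw [← mul_assoc]; exact hcdf)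
  have h1 : perp c ⊔ perp (d * f) = 1 := hPF c hc (d * f) (hmulc d f hd hf) hdfc
  have hdfp : ¬ perp (d * f) ≤ p := fun h => hplt (h1 ▸ sup_le hcp h)
  -- g
  obtain ⟨g, hg, hgle, hgp⟩ := compact_below halg hdfp
  have hdfg : (d * f) * g = ⊥ :=
    le_bot_iff.mp ((qmul_le_qmul (le_refl (d*f)) hgle).trans (le_of_eq (mul_perp_eq_bot _)))
  have hfgd : f * g ≤ perp d := le_perp (by rw [← mul_assoc]; exact hdfg)
  have h2 : perp d ⊔ perp (f * g) = 1 := hPF d hd (f * g) (hmulc f g hf hg) hfgd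
  have hfgp : ¬ perp (f * g) ≤ p := fun h => hplt (h2 ▸ sup_le hdp h)
  -- h
  obtain ⟨h, hh, hhle, hhp⟩ := compact_below halg hfgp
  have hfgh : (f * g) * h = ⊥ :=
    le_bot_iff.mp ((qmul_le_qmul (le_refl (f*g)) hhle).trans (le_of_eq (mul_perp_eq_bot _)))
  have : f * (g * h) ≤ p := by rw [← mul_assoc, hfgh]; exact bot_le
  rcases hp.2 f (g * h) this with h' | h'
  · exact hfp h'
  · rcases hp.2 g h h' with h'' | h''
    · exact hgp h''
    · exact hhp h''

end CommQuantale

open CommQuantale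

theorem stmt18 {A : Type*} [CommQuantale A]
    (hcoh : Coherent A)
    (hPF : ∀ c : A, IsCompactElement c → IsPure (perp c))
    (p : A) (hp : MPrime p) : MPrime (O p) := by
  obtain ⟨halg, h1c, hmulc⟩ := hcoh
  have hplt : ¬ (1 : A) ≤ p := fun h => absurd (le_antisymm hp.1.le h) (ne_of_lt hp.1)
  -- O p ≤ p
  have hOp : O p ≤ p := by
    apply _root_.sSup_le
    rintro c ⟨hc, hcp⟩
    have : ∃ x ∈ {x : A | c * x = ⊥}, ¬ x ≤ p := by
      by_contra h; push_neg at h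
      exact hcp (_root_.sSup_le h)
    obtain ⟨x, hx, hxp⟩ := this
    rcases hp.2 c x (by rw [hx]; exact bot_le) with h | h
    · exact h
    · exact absurd h hxp
  constructor
  · exact lt_of_le_of_lt hOp hp.1
  · intro a b hab
    by_contra hcon
    push_neg at hcon
    obtain ⟨haO, hbO⟩ := hcon
    obtain ⟨c, hc, hca, hcO⟩ := compact_below halg haO
    obtain ⟨d, hd, hdb, hdO⟩ := compact_below halg hbO
    have hcdO : c * d ≤ O p := (qmul_le_qmul hca hdb).trans hab
    -- c*d compact, below sSup of generating set
    obtain ⟨t, hts, htle⟩ := (CompleteLattice.isCompactElement_iff_exists_le_sSup_of_le_sSup A (c * d)).mp (hmulc c d hc hd) _ hcdO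
    -- induction: perp (t.sup id) ≰ p
    have hkey : ∀ t : Finset A,
        (↑t ⊆ {c : A | IsCompactElement c ∧ ¬ perp c ≤ p}) → ¬ perp (t.sup id) ≤ p := by
      intro t
      classical
      induction t using Finset.induction with
      | empty => intro _; simp only [Finset.sup_empty, perp_bot]; exact fun h => hplt (by rw [CommQuantale.one_eq_top (A := A)]; exact h)
      | @insert x s hx ih =>
        intro hsub
        have hxmem : x ∈ {c : A | IsCompactElement c ∧ ¬ perp c ≤ p} :=
          hsub (Finset.mem_coe.mpr (Finset.mem_insert_self x s))
        have hssub : ↑s ⊆ {c : A | IsCompactElement c ∧ ¬ perp c ≤ p} :=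
          fun y hy => hsub (Finset.mem_coe.mpr (Finset.mem_insert_of_mem hy))
        rw [Finset.sup_insert]
        intro hle
        -- perp x * perp (s.sup id) ≤ perp (x ⊔ s.sup id)
        have hmul : perp x * perp (s.sup id) ≤ perp (id x ⊔ s.sup id) := by
          apply le_perp
          rw [mul_comm, qmul_sup]
          simp only [id_eq]
          apply le_bot_iff.mp
          apply sup_le
          · calc perp x * perp (s.sup id) * x
                = perp (s.sup id) * (x * perp x) := by
                  rw [mul_comm (perp x), mul_assoc, mul_comm (perp x) x]
              _ = perp (s.sup id) * ⊥ := by rw [mul_perp_eq_bot]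
              _ ≤ ⊥ := le_of_eq (qmul_bot _)
          · calc perp x * perp (s.sup id) * s.sup id
                = perp x * (s.sup id * perp (s.sup id)) := by
                  rw [mul_assoc, mul_comm (perp (s.sup id))]
              _ = perp x * ⊥ := by rw [mul_perp_eq_bot]
              _ ≤ ⊥ := le_of_eq (qmul_bot _)
        rcases hp.2 (perp x) (perp (s.sup id)) (hmul.trans hle) with h | h
        · exact hxmem.2 h
        · exact ih hssub h
    have htp : ¬ perp (t.sup id) ≤ p := hkey t hts
    have htcomp : IsCompactElement (t.sup id) :=
      isCompactElement_finsetSup t (fun x hx => (hts (Finset.mem_coe.mpr hx)).1)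
    have hcdp : ¬ perp (c * d) ≤ p := fun h => htp ((perp_anti htle).trans h)
    rcases key ⟨halg, h1c, hmulc⟩ hPF hp hc hd hcdp with h | h
    · exact hcO (le_sSup ⟨hc, h⟩)
    · exact hdO (le_sSup ⟨hd, h⟩)
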